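/- arXiv:1806.02553 — 2 statements merged into one kernel-verified Lean document; each statement's English description precedes it below -/
import Mathlib

section
/- There exists a constant K ≥ 1 (one may take Grothendieck's constant K_G) such that: for every m ∈ ℕ, all real scalars λ_1, …, λ_m, every n ∈ ℕ and all continuous linear functionals x_1*, …, x_n* on c_0 satisfying sup_{‖x‖ ≤ 1} ∑_{k=1}^n |x_k*(x)| ≤ 1, one has ∑_{k=1}^n | ∑_{i=1}^m λ_i |x_k*(e_i)| | ≤ K · (∑_{i=1}^m λ_i^2)^{1/2}. -/
/-!
Cauchy–Schwarz in each `k` bounds the left side by `‖λ‖₂ · ∑ₖ ‖(x_k*(e_i))_i‖₂`, so it suffices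
to show `∑ₖ ‖(x_k*(e_i))_i‖₂ ≤ √3`. The sign vectors `∑ εᵢ eᵢ` lie in the unit ball of `c₀`, so the
hypothesis gives `∑ₖ |∑ᵢ εᵢ x_k*(e_i)| ≤ 1` for every choice of signs; averaging over the signs
and using Khintchine's inequality `‖a‖₂ ≤ √3 · 𝔼|∑ εᵢ aᵢ|` for each `k` gives the bound, so
`K = √3` works. Khintchine's inequality itself follows from `𝔼 Y² = ‖a‖₂²` and
`𝔼 Y⁴ ≤ 3 ‖a‖₂⁴` by the interpolation `(𝔼 Y²)³ ≤ (𝔼|Y|)² 𝔼 Y⁴`.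
-/

open Finset

theorem ZeroAtInftyContinuousMap.sum_apply {α β ι : Type*} [TopologicalSpace α]
    [TopologicalSpace β] [AddCommMonoid β] [ContinuousAdd β] (s : Finset ι)
    (f : ι → ZeroAtInftyContinuousMap α β) (x : α) : (∑ i ∈ s, f i) x = ∑ i ∈ s, f i x :=
  map_sum (⟨⟨fun g : ZeroAtInftyContinuousMap α β => g x, rfl⟩, fun _ _ => rfl⟩ :
    ZeroAtInftyContinuousMap α β →+ β) f s

section SignedSum

variable {ι : Type*} [DecidableEq ι]

def subsetSign (S : Finset ι) (i : ι) : ℝ := if i ∈ S then 1 else -1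

lemma abs_subsetSign (S : Finset ι) (i : ι) : |subsetSign S i| = 1 := by
  unfold subsetSign; split_ifs <;> simp

/-- Sign patterns on `s` are encoded by the subsets `S ⊆ s` where the sign is `+1`, so summing
over `s.powerset` is `2 ^ #s` times the expectation over a Rademacher sequence. -/
def signedSum (b : ι → ℝ) (s S : Finset ι) : ℝ := ∑ i ∈ s, subsetSign S i * b i

lemma sum_powerset_insert_signedSum (g : ℝ → ℝ) (b : ι → ℝ) {a : ι} {s : Finset ι}
    (ha : a ∉ s) :
    ∑ S ∈ (insert a s).powerset, g (signedSum b (insert a s) S) =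
      ∑ S ∈ s.powerset, (g (signedSum b s S - b a) + g (signedSum b s S + b a)) := by
  rw [sum_powerset_insert ha, ← sum_add_distrib]
  refine sum_congr rfl fun S hS => ?_
  have haS : a ∉ S := fun h => ha (mem_powerset.mp hS h)
  have hsign : ∀ i ∈ s, subsetSign (insert a S) i * b i = subsetSign S i * b i := fun i hi => by
    simp [subsetSign, ne_of_mem_of_not_mem hi ha]
  have hleft : signedSum b (insert a s) S = signedSum b s S - b a := by
    rw [signedSum, sum_insert ha, subsetSign, if_neg haS, signedSum]; ring
  have hright : signedSum b (insert a s) (insert a S) = signedSum b s S + b a := by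
    rw [signedSum, sum_insert ha, subsetSign, if_pos (mem_insert_self a S), sum_congr rfl hsign,
      signedSum]
    ring
  rw [hleft, hright]

lemma sum_powerset_signedSum_sq (b : ι → ℝ) (s : Finset ι) :
    ∑ S ∈ s.powerset, signedSum b s S ^ 2 = 2 ^ #s * ∑ i ∈ s, b i ^ 2 := by
  induction s using Finset.induction_on with
  | empty => simp [signedSum]
  | insert a s ha ih =>
    rw [sum_powerset_insert_signedSum (· ^ 2) b ha, card_insert_of_notMem ha, sum_insert ha]
    simp only [show ∀ y, (y - b a) ^ 2 + (y + b a) ^ 2 = 2 * y ^ 2 + 2 * b a ^ 2 from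
      fun y => by ring, sum_add_distrib, ← mul_sum, ih, sum_const, card_powerset, nsmul_eq_mul]
    push_cast
    ring

lemma sum_powerset_signedSum_pow_four_le (b : ι → ℝ) (s : Finset ι) :
    ∑ S ∈ s.powerset, signedSum b s S ^ 4 ≤ 3 * 2 ^ #s * (∑ i ∈ s, b i ^ 2) ^ 2 := by
  induction s using Finset.induction_on with
  | empty => simp [signedSum]
  | insert a s ha ih =>
    rw [sum_powerset_insert_signedSum (· ^ 4) b ha, card_insert_of_notMem ha, sum_insert ha]
    simp only [show ∀ y, (y - b a) ^ 4 + (y + b a) ^ 4 = 2 * y ^ 4 + 12 * b a ^ 2 * y ^ 2 +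
      2 * b a ^ 4 from fun y => by ring, sum_add_distrib, ← mul_sum,
      sum_powerset_signedSum_sq, sum_const, card_powerset, nsmul_eq_mul]
    push_cast
    rw [pow_succ (2 : ℝ) #s]
    have h2 : (0 : ℝ) ≤ 2 ^ #s := by positivity
    have ht : 0 ≤ ∑ i ∈ s, b i ^ 2 := sum_nonneg fun i _ => sq_nonneg _
    nlinarith [mul_nonneg h2 (sq_nonneg (b a ^ 2)), mul_nonneg h2 ht]

end SignedSum

/-- Two Cauchy–Schwarz steps, `(∑ f²)² ≤ ∑ |f| · ∑ |f|³` and `(∑ |f|³)² ≤ ∑ f² · ∑ f⁴`, give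
the interpolation of the `2`-norm between the `1`- and `4`-norms. -/
lemma sum_sq_pow_three_le {α : Type*} (s : Finset α) (f : α → ℝ) :
    (∑ i ∈ s, f i ^ 2) ^ 3 ≤ (∑ i ∈ s, |f i|) ^ 2 * ∑ i ∈ s, f i ^ 4 := by
  set B := ∑ i ∈ s, f i ^ 2
  have h13 : B ^ 2 ≤ (∑ i ∈ s, |f i|) * ∑ i ∈ s, |f i| ^ 3 :=
    sum_sq_le_sum_mul_sum_of_sq_le_mul s (fun i _ => abs_nonneg _)
      (fun i _ => by positivity) fun i _ => le_of_eq (by rw [← sq_abs (f i)]; ring)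
  have h24 : (∑ i ∈ s, |f i| ^ 3) ^ 2 ≤ B * ∑ i ∈ s, f i ^ 4 :=
    sum_sq_le_sum_mul_sum_of_sq_le_mul s (fun i _ => sq_nonneg _)
      (fun i _ => by positivity) fun i _ =>
        le_of_eq (by rw [← (by decide : Even 4).pow_abs, ← sq_abs (f i)]; ring)
  have hB : 0 ≤ B := sum_nonneg fun i _ => sq_nonneg _
  rcases hB.eq_or_lt with hB0 | hBpos
  · rw [← hB0, zero_pow three_ne_zero]; positivity
  refine le_of_mul_le_mul_left ?_ hBpos
  calc B * B ^ 3 = (B ^ 2) ^ 2 := by ring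
    _ ≤ ((∑ i ∈ s, |f i|) * ∑ i ∈ s, |f i| ^ 3) ^ 2 := pow_le_pow_left₀ (sq_nonneg _) h13 2
    _ = (∑ i ∈ s, |f i|) ^ 2 * (∑ i ∈ s, |f i| ^ 3) ^ 2 := by ring
    _ ≤ (∑ i ∈ s, |f i|) ^ 2 * (B * ∑ i ∈ s, f i ^ 4) := by gcongr
    _ = B * ((∑ i ∈ s, |f i|) ^ 2 * ∑ i ∈ s, f i ^ 4) := by ring

section Khintchine

variable {ι : Type*} [DecidableEq ι]

theorem khintchine_signedSum (b : ι → ℝ) (s : Finset ι) :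
    2 ^ #s * √(∑ i ∈ s, b i ^ 2) ≤ √3 * ∑ S ∈ s.powerset, |signedSum b s S| := by
  set t := ∑ i ∈ s, b i ^ 2
  set A := ∑ S ∈ s.powerset, |signedSum b s S|
  have hN : (0 : ℝ) < 2 ^ #s := by positivity
  have ht : 0 ≤ t := sum_nonneg fun i _ => sq_nonneg _
  rcases ht.eq_or_lt with ht0 | htpos
  · rw [← ht0, Real.sqrt_zero, mul_zero]; positivity
  have hholder : (2 ^ #s * t) ^ 3 ≤ A ^ 2 * (3 * 2 ^ #s * t ^ 2) := by
    rw [← sum_powerset_signedSum_sq]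
    exact (sum_sq_pow_three_le _ _).trans (by gcongr; exact sum_powerset_signedSum_pow_four_le b s)
  have hsq : (2 ^ #s) ^ 2 * t ≤ 3 * A ^ 2 := by
    refine le_of_mul_le_mul_left ?_ (mul_pos hN (pow_pos htpos 2))
    nlinarith [hholder]
  refine le_of_pow_le_pow_left₀ two_ne_zero (by positivity) ?_
  rw [mul_pow, mul_pow, Real.sq_sqrt ht, Real.sq_sqrt zero_le_three]
  exact hsq

theorem sum_sqrt_sum_sq_le_sqrt_three {κ : Type*} [Fintype κ] (b : κ → ι → ℝ) (s : Finset ι)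
    (h : ∀ S ⊆ s, ∑ k, |signedSum (b k) s S| ≤ 1) :
    ∑ k, √(∑ i ∈ s, b k i ^ 2) ≤ √3 := by
  have hN : (0 : ℝ) < 2 ^ #s := by positivity
  refine le_of_mul_le_mul_left ?_ hN
  calc 2 ^ #s * ∑ k, √(∑ i ∈ s, b k i ^ 2)
      ≤ ∑ k, √3 * ∑ S ∈ s.powerset, |signedSum (b k) s S| := by
        rw [mul_sum]; exact sum_le_sum fun k _ => khintchine_signedSum (b k) s
    _ = √3 * ∑ S ∈ s.powerset, ∑ k, |signedSum (b k) s S| := by rw [← mul_sum, sum_comm]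
    _ ≤ √3 * ∑ S ∈ s.powerset, 1 := by
        gcongr with S hS; exact h S (mem_powerset.mp hS)
    _ = 2 ^ #s * √3 := by rw [sum_const, card_powerset, nsmul_one]; push_cast; ring

end Khintchine

lemma norm_sum_smul_basis_le_one (e : ℕ → ZeroAtInftyContinuousMap ℕ ℝ)
    (he : ∀ i j : ℕ, e i j = if j = i then 1 else 0) (s : Finset ℕ) (c : ℕ → ℝ)
    (hc : ∀ i ∈ s, |c i| ≤ 1) : ‖∑ i ∈ s, c i • e i‖ ≤ 1 := by
  rw [← ZeroAtInftyContinuousMap.norm_toBCF_eq_norm, BoundedContinuousFunction.norm_le zero_le_one]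
  intro j
  change |(∑ i ∈ s, c i • e i) j| ≤ 1
  simp only [ZeroAtInftyContinuousMap.sum_apply, ZeroAtInftyContinuousMap.smul_apply, he,
    smul_eq_mul, mul_ite, mul_one, mul_zero, sum_ite_eq]
  split_ifs with hj
  · exact hc j hj
  · simp

/-- **Remark 3.4, upper estimate (case of c₀).** There is `K ≥ 1` such that for all scalars
`λ_1, …, λ_m` and every finite family `x_1*, …, x_n*` of functionals on `c₀ = C₀(ℕ, ℝ)`
with `sup_{‖x‖≤1} ∑_k |x_k*(x)| ≤ 1`, one has
`∑_k |∑_i λ_i |x_k*(e_i)|| ≤ K (∑_i λ_i^2)^(1/2)`, where `e i` is the canonical `i`-th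
basis vector of `c₀`.  This is the estimate `‖∑ λ_i |δ_{e_i}|‖_{FBL[c₀]} ≤ K (∑ λ_i^2)^(1/2)`
written via the explicit formula for the free Banach lattice norm. -/
theorem fbl_c0_abs_upper :
    ∃ K : ℝ, 1 ≤ K ∧
      ∀ (e : ℕ → ZeroAtInftyContinuousMap ℕ ℝ),
        (∀ i j : ℕ, e i j = if j = i then 1 else 0) →
      ∀ (m : ℕ) (lam : Fin m → ℝ) (n : ℕ)
        (xs : Fin n → (ZeroAtInftyContinuousMap ℕ ℝ →L[ℝ] ℝ)),
        (∀ x, ‖x‖ ≤ 1 → ∑ k, |xs k x| ≤ 1) →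
        ∑ k, abs (∑ i, lam i * |xs k (e (i : ℕ))|) ≤
          K * (∑ i, (lam i) ^ 2) ^ ((1 : ℝ) / 2) := by
  refine ⟨√3, Real.one_le_sqrt.mpr (by norm_num), fun e he m lam n xs hxs => ?_⟩
  set row : Fin n → ℝ := fun k => √(∑ i ∈ range m, xs k (e i) ^ 2)
  have hrows : ∑ k, row k ≤ √3 := by
    refine sum_sqrt_sum_sq_le_sqrt_three (fun k i => xs k (e i)) (range m) fun S _ => ?_
    simpa [signedSum, map_sum] using
      hxs _ (norm_sum_smul_basis_le_one e he (range m) (subsetSign S)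
        fun i _ => (abs_subsetSign S i).le)
  have hcs : ∀ k, abs (∑ i, lam i * |xs k (e i)|) ≤ √(∑ i, lam i ^ 2) * row k := fun k => by
    refine (abs_sum_le_sum_abs _ _).trans ?_
    simpa [abs_mul, Fin.sum_univ_eq_sum_range (fun i => xs k (e i) ^ 2)] using
      Real.sum_mul_le_sqrt_mul_sqrt univ (fun i => |lam i|) fun i => |xs k (e i)|
  calc ∑ k, abs (∑ i, lam i * |xs k (e i)|) ≤ ∑ k, √(∑ i, lam i ^ 2) * row k :=
        sum_le_sum fun k _ => hcs k
    _ = √(∑ i, lam i ^ 2) * ∑ k, row k := (mul_sum _ _ _).symm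
    _ ≤ √(∑ i, lam i ^ 2) * √3 := by gcongr
    _ = √3 * (∑ i, lam i ^ 2) ^ ((1 : ℝ) / 2) := by rw [Real.sqrt_eq_rpow, mul_comm]
end

section
/- For every m ∈ ℕ and all nonnegative real scalars λ_1, …, λ_m, there exist n ∈ ℕ and continuous linear functionals x_1*, …, x_n* on c_0 such that sup_{‖x‖ ≤ 1} ∑_{k=1}^n |x_k*(x)| ≤ 1 and ∑_{k=1}^n ∑_{i=1}^m λ_i |x_k*(e_i)| ≥ (∑_{i=1}^m λ_i^2)^{1/2}. -/
/-!
Average over all sign patterns `ε ∈ {±1}^m`. The Rademacher signs are orthonormal, so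
`∑_ε (∑_i ε_i a_i)^2 = 2^m ∑_i a_i^2`, and Cauchy–Schwarz turns this into
`∑_ε |∑_i ε_i a_i| ≤ 2^m ‖a‖₂`. Hence, for `μ = λ / ‖λ‖₂`, the `2^m` functionals
`x ↦ 2^{-m} ∑_i ε_i μ_i x_i` have `∑_ε |x_ε*(x)| ≤ ‖(μ_i x_i)_i‖₂ ≤ ‖x‖_∞`, while each
`∑_ε |x_ε*(e_i)|` equals `μ_i`, so that `∑_ε ∑_i λ_i |x_ε*(e_i)| = ⟨λ, μ⟩ = ‖λ‖₂`.
-/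

open Finset
open scoped ZeroAtInfty

namespace ZeroAtInftyContinuousMap

variable {α β 𝕜 : Type*} [TopologicalSpace α] [NormedAddCommGroup β]
  [NontriviallyNormedField 𝕜] [NormedSpace 𝕜 β]

theorem norm_apply_le (f : C₀(α, β)) (a : α) : ‖f a‖ ≤ ‖f‖ :=
  f.toBCF.norm_coe_le_norm a

variable (𝕜) in
noncomputable def evalCLM (a : α) : C₀(α, β) →L[𝕜] β :=
  LinearMap.mkContinuous ⟨⟨fun f => f a, fun _ _ => rfl⟩, fun _ _ => rfl⟩ 1
    fun f => by simpa using norm_apply_le f a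

@[simp]
theorem evalCLM_apply (a : α) (f : C₀(α, β)) : evalCLM 𝕜 a f = f a :=
  rfl

theorem norm_evalCLM_le (a : α) : ‖(evalCLM 𝕜 a : C₀(α, β) →L[𝕜] β)‖ ≤ 1 :=
  LinearMap.mkContinuous_norm_le _ zero_le_one _

end ZeroAtInftyContinuousMap

def boolSign (b : Bool) : ℝ := if b then 1 else -1

@[simp]
theorem boolSign_not (b : Bool) : boolSign (!b) = -boolSign b := by
  cases b <;> simp [boolSign]

@[simp]
theorem abs_boolSign (b : Bool) : |boolSign b| = 1 := by
  cases b <;> simp [boolSign]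

@[simp]
theorem boolSign_mul_self (b : Bool) : boolSign b * boolSign b = 1 := by
  cases b <;> simp [boolSign]

section Rademacher

variable {ι : Type*} [Fintype ι] [DecidableEq ι]

theorem sum_boolSign_mul_boolSign (i j : ι) :
    ∑ ε : ι → Bool, boolSign (ε i) * boolSign (ε j) =
      if i = j then 2 ^ Fintype.card ι else 0 := by
  split_ifs with hij
  · simp [hij]
  -- flipping the `j`-th sign changes the sign of every summand
  have hflip : Function.Involutive fun ε : ι → Bool => Function.update ε j (!ε j) := fun ε => by
    ext k; by_cases hk : k = j <;> simp [hk]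
  have h := Equiv.sum_comp (hflip.toPerm _) fun ε => boolSign (ε i) * boolSign (ε j)
  simp only [Function.Involutive.coe_toPerm, Function.update_of_ne hij,
    Function.update_self, boolSign_not, mul_neg, sum_neg_distrib] at h
  linarith

theorem sum_sq_sum_boolSign_mul (a : ι → ℝ) :
    ∑ ε : ι → Bool, (∑ i, boolSign (ε i) * a i) ^ 2 = 2 ^ Fintype.card ι * ∑ i, a i ^ 2 :=
  calc ∑ ε : ι → Bool, (∑ i, boolSign (ε i) * a i) ^ 2
      = ∑ i, ∑ j, a i * a j * ∑ ε : ι → Bool, boolSign (ε i) * boolSign (ε j) := by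
        simp_rw [sq, sum_mul_sum, mul_sum]
        rw [sum_comm]
        refine sum_congr rfl fun i _ => ?_
        rw [sum_comm]
        refine sum_congr rfl fun j _ => sum_congr rfl fun ε _ => ?_
        ring
    _ = 2 ^ Fintype.card ι * ∑ i, a i ^ 2 := by
        simp [sum_boolSign_mul_boolSign, mul_sum, sq, mul_comm]

theorem sum_abs_sum_boolSign_mul_le (a : ι → ℝ) :
    ∑ ε : ι → Bool, |∑ i, boolSign (ε i) * a i| ≤
      2 ^ Fintype.card ι * √(∑ i, a i ^ 2) := by
  have hcs := sq_sum_le_card_mul_sum_sq (s := univ)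
    (f := fun ε : ι → Bool => |∑ i, boolSign (ε i) * a i|)
  simp only [sq_abs, sum_sq_sum_boolSign_mul, card_univ, Fintype.card_fun,
    Fintype.card_bool, Nat.cast_pow, Nat.cast_ofNat] at hcs
  rw [← Real.sqrt_sq (by positivity : (0 : ℝ) ≤ 2 ^ Fintype.card ι), ← Real.sqrt_mul',
    Real.le_sqrt (by positivity) (by positivity)]
  · linarith
  · exact sum_nonneg fun i _ => sq_nonneg (a i)

end Rademacher

section Functionals

variable {ι E : Type*} [Fintype ι] [SeminormedAddCommGroup E] [NormedSpace ℝ E]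

noncomputable def rademacherFunctional (φ : ι → E →L[ℝ] ℝ) (μ : ι → ℝ) (ε : ι → Bool) :
    E →L[ℝ] ℝ :=
  (2 ^ Fintype.card ι : ℝ)⁻¹ • ∑ i, (boolSign (ε i) * μ i) • φ i

theorem rademacherFunctional_apply (φ : ι → E →L[ℝ] ℝ) (μ : ι → ℝ) (ε : ι → Bool) (x : E) :
    rademacherFunctional φ μ ε x =
      (2 ^ Fintype.card ι : ℝ)⁻¹ * ∑ i, boolSign (ε i) * (μ i * φ i x) := by
  simp [rademacherFunctional, mul_assoc]

theorem sum_abs_rademacherFunctional_le [DecidableEq ι] {φ : ι → E →L[ℝ] ℝ} (hφ : ∀ i, ‖φ i‖ ≤ 1)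
    {μ : ι → ℝ} (hμ : ∑ i, μ i ^ 2 ≤ 1) (x : E) :
    ∑ ε, |rademacherFunctional φ μ ε x| ≤ ‖x‖ := by
  have hsq : ∑ i, (μ i * φ i x) ^ 2 ≤ ‖x‖ ^ 2 :=
    calc ∑ i, (μ i * φ i x) ^ 2 ≤ ∑ i, μ i ^ 2 * ‖x‖ ^ 2 := by
          refine sum_le_sum fun i _ => ?_
          rw [mul_pow, ← sq_abs (φ i x)]
          gcongr
          rw [← Real.norm_eq_abs]
          simpa using (φ i).le_of_opNorm_le (hφ i) x
      _ ≤ ‖x‖ ^ 2 := by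
          rw [← sum_mul]
          exact mul_le_of_le_one_left (by positivity) hμ
  calc ∑ ε, |rademacherFunctional φ μ ε x|
      = (2 ^ Fintype.card ι : ℝ)⁻¹ * ∑ ε : ι → Bool, |∑ i, boolSign (ε i) * (μ i * φ i x)| := by
        simp_rw [rademacherFunctional_apply, abs_mul, abs_inv, abs_pow, abs_two, ← mul_sum]
    _ ≤ (2 ^ Fintype.card ι : ℝ)⁻¹ * (2 ^ Fintype.card ι * √(∑ i, (μ i * φ i x) ^ 2)) := by
        gcongr
        exact sum_abs_sum_boolSign_mul_le _
    _ ≤ ‖x‖ := by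
        rw [inv_mul_cancel_left₀ (by positivity)]
        exact Real.sqrt_le_left (norm_nonneg x) |>.mpr hsq

theorem sum_abs_rademacherFunctional_apply_of_biorthogonal [DecidableEq ι] {φ : ι → E →L[ℝ] ℝ}
    {v : E} {i : ι} (hv : ∀ j, φ j v = if j = i then 1 else 0) (μ : ι → ℝ) :
    ∑ ε, |rademacherFunctional φ μ ε v| = |μ i| := by
  simp [rademacherFunctional_apply, hv, abs_mul]

theorem exists_sum_abs_le_norm_and_sqrt_sum_sq_le [DecidableEq ι] {φ : ι → E →L[ℝ] ℝ}
    (hφ : ∀ i, ‖φ i‖ ≤ 1) {v : ι → E} (hv : ∀ i j, φ j (v i) = if j = i then 1 else 0)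
    {lam : ι → ℝ} (hlam : ∀ i, 0 ≤ lam i) :
    ∃ (n : ℕ) (xs : Fin n → E →L[ℝ] ℝ), (∀ x, ∑ k, |xs k x| ≤ ‖x‖) ∧
      √(∑ i, lam i ^ 2) ≤ ∑ k, ∑ i, lam i * |xs k (v i)| := by
  -- for `lam = 0` this is `μ = 0` (division by zero), and both bounds still hold
  set μ := fun i => lam i / √(∑ i, lam i ^ 2)
  have hμ : ∑ i, μ i ^ 2 ≤ 1 := by
    simp only [μ, div_pow, ← sum_div, Real.sq_sqrt (sum_nonneg fun i _ => sq_nonneg (lam i))]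
    exact div_self_le_one _
  let F := rademacherFunctional φ μ
  let σ := (Fintype.equivFin (ι → Bool)).symm
  refine ⟨_, fun k => F (σ k), fun x => ?_, le_of_eq ?_⟩
  · rw [σ.sum_comp fun ε => |F ε x|]
    exact sum_abs_rademacherFunctional_le hφ hμ x
  · rw [σ.sum_comp fun ε => ∑ i, lam i * |F ε (v i)|, sum_comm]
    simp_rw [← mul_sum, F, sum_abs_rademacherFunctional_apply_of_biorthogonal (hv _), μ,
      abs_of_nonneg (div_nonneg (hlam _) (Real.sqrt_nonneg _)), mul_div_assoc', ← sq, ← sum_div,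
      Real.div_sqrt]

end Functionals

/-- **Remark 3.4, lower estimate (case of c₀).** For every `m` nonnegative scalars
`λ_1, …, λ_m`, there exist functionals `x_1*, …, x_n*` on `c₀ = C₀(ℕ, ℝ)` with
`sup_{‖x‖≤1} ∑_k |x_k*(x)| ≤ 1` and `∑_k ∑_i λ_i |x_k*(e_i)| ≥ (∑_i λ_i^2)^(1/2)`,
where `e i` is the canonical `i`-th basis vector of `c₀`.  This witnesses the estimate
`‖∑ λ_i |δ_{e_i}|‖_{FBL[c₀]} ≥ (∑ λ_i^2)^(1/2)` via the explicit formula for the free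
Banach lattice norm. -/
theorem fbl_c0_abs_lower
    (e : ℕ → ZeroAtInftyContinuousMap ℕ ℝ)
    (he : ∀ i j : ℕ, e i j = if j = i then 1 else 0)
    (m : ℕ) (lam : Fin m → ℝ) (hlam : ∀ i, 0 ≤ lam i) :
    ∃ (n : ℕ) (xs : Fin n → (ZeroAtInftyContinuousMap ℕ ℝ →L[ℝ] ℝ)),
      (∀ x, ‖x‖ ≤ 1 → ∑ k, |xs k x| ≤ 1) ∧
      (∑ i, (lam i) ^ 2) ^ ((1 : ℝ) / 2) ≤
        ∑ k, ∑ i, lam i * |xs k (e (i : ℕ))| := by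
  have hv (i j : Fin m) :
      ZeroAtInftyContinuousMap.evalCLM ℝ (j : ℕ) (e i) = if j = i then 1 else 0 := by
    simp [he, Fin.val_inj]
  obtain ⟨n, xs, hnorm, hlower⟩ := exists_sum_abs_le_norm_and_sqrt_sum_sq_le
    (fun j : Fin m => ZeroAtInftyContinuousMap.norm_evalCLM_le (j : ℕ)) hv hlam
  exact ⟨n, xs, fun x hx => (hnorm x).trans hx, by rwa [← Real.sqrt_eq_rpow]⟩
end
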